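/- arXiv:1102.3546 — 6 statements merged into one kernel-verified Lean document; each statement's English description precedes it below -/
import Mathlib

section
/- If u: [0,∞) → (0,∞) solves u'' = (1+(u')²)·((u − u'·y)/2 + (n−2)/u) with n ≥ 3, u(0) = C > 0, u'(0) = 0, then u'(y) > 0 for all y > 0. -/
open Set Filter Topology

/-- If `f` has positive right-derivative at `a` within `Ici a` and `f a = 0`,
then `f > 0` just to the right of `a`. -/
lemma pos_right_of_deriv_pos {f : ℝ → ℝ} {a d : ℝ}
    (hf : HasDerivWithinAt f d (Ici a) a) (hfa : f a = 0) (hd : 0 < d) :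
    ∀ᶠ y in 𝓝[>] a, 0 < f y := by
  rw [hasDerivWithinAt_iff_tendsto_slope, Ici_sdiff_left] at hf
  filter_upwards [hf.eventually (eventually_gt_nhds hd), self_mem_nhdsWithin]
    with y hy (hy2 : a < y)
  rw [slope_def_field, hfa, sub_zero] at hy
  have := mul_pos hy (sub_pos.mpr hy2)
  rwa [div_mul_cancel₀ _ (by linarith : y - a ≠ 0)] at this

/-- For a solution of the self-expander ODE with `n ≥ 3`, `u(0)=C>0`, `u'(0)=0`,
the derivative is strictly positive for all `y > 0`. -/
theorem selfexpander_deriv_pos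
    (n : ℕ) (hn : 3 ≤ n) (C : ℝ) (hC : 0 < C) (u u' u'' : ℝ → ℝ)
    (hpos : ∀ y ∈ Ici (0:ℝ), 0 < u y)
    (hd1 : ∀ y ∈ Ici (0:ℝ), HasDerivWithinAt u (u' y) (Ici 0) y)
    (hd2 : ∀ y ∈ Ici (0:ℝ), HasDerivWithinAt u' (u'' y) (Ici 0) y)
    (hcont : ContinuousOn u'' (Ici 0))
    (hODE : ∀ y ∈ Ici (0:ℝ),
      u'' y = (1 + (u' y)^2) * ((u y - u' y * y)/2 + ((n : ℝ) - 2) / u y))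
    (hu0 : u 0 = C) (hu'0 : u' 0 = 0) :
    ∀ y : ℝ, 0 < y → 0 < u' y := by
  by_contra hcon
  push_neg at hcon
  obtain ⟨z, hz, hz'⟩ := hcon
  set S : Set ℝ := {y : ℝ | 0 < y ∧ u' y ≤ 0} with hSdef
  have hSne : S.Nonempty := ⟨z, hz, hz'⟩
  have hSbdd : BddBelow S := ⟨0, fun y hy => hy.1.le⟩
  set y0 := sInf S with hy0def
  have hn2 : (0:ℝ) ≤ ((n:ℝ) - 2) := by
    have : (3:ℝ) ≤ n := by exact_mod_cast hn
    linarith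
  -- u'' 0 > 0
  have h0 : (0:ℝ) ∈ Ici (0:ℝ) := self_mem_Ici
  have hu''0 : 0 < u'' 0 := by
    rw [hODE 0 h0, hu'0, hu0]
    have h1 : 0 < C/2 := by linarith
    have h2 : 0 ≤ ((n:ℝ) - 2)/C := div_nonneg hn2 hC.le
    nlinarith
  -- u' > 0 just to the right of 0
  have hev : ∀ᶠ y in 𝓝[>] (0:ℝ), 0 < u' y :=
    pos_right_of_deriv_pos (hd2 0 h0) hu'0 hu''0
  rw [eventually_nhdsWithin_iff, Metric.eventually_nhds_iff] at hev
  obtain ⟨ε, hε, hεsub⟩ := hev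
  -- ε is a lower bound of S, so y0 > 0
  have hεlb : ∀ y ∈ S, ε ≤ y := by
    intro y hy
    by_contra hlt
    push_neg at hlt
    have : 0 < u' y := hεsub (by rw [Real.dist_eq, sub_zero, abs_of_pos hy.1]; exact hlt) hy.1
    linarith [hy.2]
  have hy0pos : 0 < y0 := lt_of_lt_of_le hε (le_csInf hSne hεlb)
  have hy0mem : y0 ∈ Ici (0:ℝ) := hy0pos.le
  -- u' > 0 on (0, y0)
  have hmid : ∀ y, 0 < y → y < y0 → 0 < u' y := by
    intro y hy hyy0
    by_contra hle
    push_neg at hle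
    exact absurd (csInf_le hSbdd ⟨hy, hle⟩) (not_le.mpr hyy0)
  -- u' is continuous at y0
  have hca : ContinuousAt u' y0 :=
    (hd2 y0 hy0mem).continuousWithinAt.continuousAt (Ici_mem_nhds hy0pos)
  -- u' y0 ≤ 0
  have hle0 : u' y0 ≤ 0 := by
    by_contra hgt
    push_neg at hgt
    have hev2 : ∀ᶠ y in 𝓝 y0, 0 < u' y := hca.eventually (eventually_gt_nhds hgt)
    rw [Metric.eventually_nhds_iff] at hev2
    obtain ⟨δ, hδ, hδsub⟩ := hev2
    have : y0 + δ ≤ y0 := le_csInf hSne (by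
      intro y hy
      by_contra hlt
      push_neg at hlt
      have h1 : y0 ≤ y := csInf_le hSbdd hy
      have : 0 < u' y := hδsub (by rw [Real.dist_eq, abs_lt]; constructor <;> linarith)
      linarith [hy.2])
    linarith
  -- u' y0 ≥ 0
  have hge0 : 0 ≤ u' y0 := by
    have htd : Tendsto u' (𝓝[<] y0) (𝓝 (u' y0)) := hca.tendsto.mono_left nhdsWithin_le_nhds
    refine ge_of_tendsto htd ?_
    have hIoi : Ioi (0:ℝ) ∈ 𝓝[<] y0 :=
      nhdsWithin_le_nhds (Ioi_mem_nhds hy0pos)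
    filter_upwards [hIoi, self_mem_nhdsWithin] with y hy1 (hy2 : y < y0)
    exact (hmid y hy1 hy2).le
  have hu'y0 : u' y0 = 0 := le_antisymm hle0 hge0
  -- u'' y0 > 0
  have hu''y0 : 0 < u'' y0 := by
    rw [hODE y0 hy0mem, hu'y0]
    have h1 : 0 < u y0 := hpos y0 hy0mem
    have h2 : 0 ≤ ((n:ℝ) - 2)/u y0 := div_nonneg hn2 h1.le
    nlinarith
  -- derivative of u' at y0 (full, since y0 interior)
  have hda : HasDerivAt u' (u'' y0) y0 :=
    (hd2 y0 hy0mem).hasDerivAt (Ici_mem_nhds hy0pos)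
  rw [hasDerivAt_iff_tendsto_slope] at hda
  have hslope : ∀ᶠ y in 𝓝[<] y0, 0 < slope u' y0 y := by
    have hmono : 𝓝[<] y0 ≤ 𝓝[≠] y0 :=
      nhdsWithin_mono _ (fun y hy => ne_of_lt hy)
    exact (hda.mono_left hmono).eventually (eventually_gt_nhds hu''y0)
  have hbad : ∀ᶠ y in 𝓝[<] y0, False := by
    have hIoi : Ioi (0:ℝ) ∈ 𝓝[<] y0 := nhdsWithin_le_nhds (Ioi_mem_nhds hy0pos)
    filter_upwards [hslope, hIoi, self_mem_nhdsWithin] with y hs hy1 (hy2 : y < y0)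
    rw [slope_def_field, hu'y0, sub_zero] at hs
    have hneg : y - y0 < 0 := by linarith
    have : u' y < 0 := by
      by_contra hge
      push_neg at hge
      have : u' y / (y - y0) ≤ 0 := div_nonpos_of_nonneg_of_nonpos hge hneg.le
      linarith
    linarith [hmid y hy1 hy2]
  obtain ⟨y, hy⟩ := hbad.exists
  exact hy
end

section
/- If u: [0,∞) → (0,∞) solves u'' = (1+(u')²)·((u − u'·y)/2 + (n−2)/u) with n ≥ 3, u(0) = C > 0, u'(0) = 0, then at every interior point y > 0 where u''(y) = 0 one has u'''(y) = −(1+(u'(y))²)·(n−2)·u'(y)/u(y)² < 0; consequently every critical point of u' is a strict local maximum. -/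
/-!
At a zero `y > 0` of `u''` the ODE forces `(u - u' y)/2 + (n-2)/u = 0`, hence
`u'(y) y = u(y) + 2(n-2)/u(y) > 0`. Differentiating the ODE at `y`, the term `2u'u''·(…)` and the
`-u'' y/2` coming from the bracket vanish, leaving `u''' = -(1+u'²)(n-2)u'/u² < 0`. So `u''`
changes sign from `+` to `-` at `y`, and `u'` is strictly increasing just left of `y` and
strictly decreasing just right of it.
-/

open Set Filter Topology

theorem eventually_hasDerivAt_of_hasDerivWithinAt {f f' : ℝ → ℝ} {s : Set ℝ} {x : ℝ}
    (hf : ∀ y ∈ s, HasDerivWithinAt f (f' y) s y) (hs : s ∈ 𝓝 x) :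
    ∀ᶠ y in 𝓝 x, HasDerivAt f (f' y) y := by
  filter_upwards [eventually_mem_nhds_iff.2 hs] with y hy
  exact (hf y (mem_of_mem_nhds hy)).hasDerivAt hy

theorem eventually_nhdsNE_lt_of_second_deriv_neg {f f' : ℝ → ℝ} {x₀ f'' : ℝ}
    (hf : ∀ᶠ x in 𝓝 x₀, HasDerivAt f (f' x) x) (hf' : HasDerivAt f' f'' x₀)
    (hcrit : f' x₀ = 0) (hneg : f'' < 0) :
    ∀ᶠ x in 𝓝[≠] x₀, f x < f x₀ := by
  have hsign := eventually_nhdsWithin_sign_eq_of_deriv_neg (hf'.deriv ▸ hneg) hcrit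
  obtain ⟨ε, hε, hball⟩ := Metric.eventually_nhds_iff_ball.mp (hf.and hsign)
  simp only [Real.ball_eq_Ioo] at hball
  have hcont : ContinuousOn f (Ioo (x₀ - ε) (x₀ + ε)) := fun x hx ↦
    (hball x hx).1.continuousAt.continuousWithinAt
  have hmono : StrictMonoOn f (Ioc (x₀ - ε) x₀) := by
    refine strictMonoOn_of_deriv_pos (convex_Ioc _ _)
      (hcont.mono (Ioc_subset_Ioo_right (by linarith))) fun x hx ↦ ?_
    rw [interior_Ioc] at hx
    obtain ⟨hderiv, hx_sign⟩ := hball x ⟨hx.1, by linarith [hx.2]⟩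
    rw [hderiv.deriv, ← sign_eq_one_iff, hx_sign, sign_eq_one_iff, sub_pos]
    exact hx.2
  have hanti : StrictAntiOn f (Ico x₀ (x₀ + ε)) := by
    refine strictAntiOn_of_deriv_neg (convex_Ico _ _)
      (hcont.mono (Ico_subset_Ioo_left (by linarith))) fun x hx ↦ ?_
    rw [interior_Ico] at hx
    obtain ⟨hderiv, hx_sign⟩ := hball x ⟨by linarith [hx.1], hx.2⟩
    rw [hderiv.deriv, ← sign_eq_neg_one_iff, hx_sign, sign_eq_neg_one_iff, sub_neg]
    exact hx.1
  filter_upwards [nhdsWithin_le_nhds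
    (Ioo_mem_nhds (sub_lt_self x₀ hε) (lt_add_of_pos_right x₀ hε)), self_mem_nhdsWithin]
    with x hx hne
  rcases lt_or_gt_of_ne hne with hlt | hgt
  · exact hmono ⟨hx.1, hlt.le⟩ ⟨by linarith, le_rfl⟩ hlt
  · exact hanti ⟨le_rfl, by linarith⟩ ⟨hgt.le, hx.2⟩ hgt

theorem selfExpander_slope_pos_of_bracket_eq_zero {c y u p : ℝ} (hc : 0 < c) (hy : 0 < y)
    (hu : 0 < u) (h : (u - p * y) / 2 + c / u = 0) : 0 < p := by
  by_contra! hp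
  have hc_div : 0 < c / u := div_pos hc hu
  have hbracket_pos : 0 < (u - p * y) / 2 + c / u := by nlinarith
  exact hbracket_pos.ne' h

theorem selfExpander_third_deriv_eq {c y u''' : ℝ} {u u' u'' : ℝ → ℝ}
    (hu : HasDerivAt u (u' y) y) (hu' : HasDerivAt u' (u'' y) y) (hu'' : HasDerivAt u'' u''' y)
    (hODE : ∀ᶠ z in 𝓝 y, u'' z = (1 + (u' z) ^ 2) * ((u z - u' z * z) / 2 + c / u z))
    (hu_ne : u y ≠ 0) (hcrit : u'' y = 0) :
    u''' = -(1 + (u' y) ^ 2) * c * u' y / (u y) ^ 2 := by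
  have hRHS := ((hu'.fun_pow 2).const_add 1).fun_mul
    (((hu.fun_sub (hu'.fun_mul (hasDerivAt_id' y))).div_const 2).fun_add
      ((hasDerivAt_const y c).fun_div hu hu_ne))
  rw [(hu''.congr_of_eventuallyEq (EventuallyEq.symm hODE)).unique hRHS, hcrit]
  field_simp
  ring

theorem selfexpander_critical_points_of_deriv_strict_local_max_general
    (n : ℕ) (hn : 3 ≤ n) (u u' u'' u''' : ℝ → ℝ)
    (hpos : ∀ y ∈ Ici (0:ℝ), 0 < u y)
    (hd1 : ∀ y ∈ Ici (0:ℝ), HasDerivWithinAt u (u' y) (Ici 0) y)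
    (hd2 : ∀ y ∈ Ici (0:ℝ), HasDerivWithinAt u' (u'' y) (Ici 0) y)
    (hd3 : ∀ y ∈ Ici (0:ℝ), HasDerivWithinAt u'' (u''' y) (Ici 0) y)
    (hODE : ∀ y ∈ Ici (0:ℝ),
      u'' y = (1 + (u' y)^2) * ((u y - u' y * y)/2 + ((n : ℝ) - 2) / u y)) :
    ∀ y : ℝ, 0 < y → u'' y = 0 →
      u''' y = -(1 + (u' y)^2) * ((n : ℝ) - 2) * u' y / (u y)^2 ∧
      u''' y < 0 ∧
      ∀ᶠ z in 𝓝[≠] y, u' z < u' y := by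
  intro y hy hcrit
  have hnhds : Ici (0:ℝ) ∈ 𝓝 y := Ici_mem_nhds hy
  have hu_pos : 0 < u y := hpos y hy.le
  have hc : (0:ℝ) < (n : ℝ) - 2 := by
    have : (3:ℝ) ≤ n := by exact_mod_cast hn
    linarith
  have hbracket : (u y - u' y * y) / 2 + ((n : ℝ) - 2) / u y = 0 := by
    have h := hODE y hy.le
    rw [hcrit, eq_comm, mul_eq_zero] at h
    exact h.resolve_left (by positivity)
  have hslope : 0 < u' y := selfExpander_slope_pos_of_bracket_eq_zero hc hy hu_pos hbracket
  have hformula := selfExpander_third_deriv_eq ((hd1 y hy.le).hasDerivAt hnhds)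
    ((hd2 y hy.le).hasDerivAt hnhds) ((hd3 y hy.le).hasDerivAt hnhds)
    (eventually_of_mem hnhds hODE) hu_pos.ne' hcrit
  have hneg : u''' y < 0 := by
    rw [hformula, neg_mul, neg_mul, neg_div, neg_lt_zero]
    positivity
  exact ⟨hformula, hneg, eventually_nhdsNE_lt_of_second_deriv_neg
    (eventually_hasDerivAt_of_hasDerivWithinAt hd2 hnhds) ((hd3 y hy.le).hasDerivAt hnhds)
    hcrit hneg⟩

/-- For a solution of the self-expander ODE with `n ≥ 3`, `u(0)=C>0`, `u'(0)=0`: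
at every `y > 0` with `u''(y) = 0` one has
`u'''(y) = -(1+(u'(y))²)(n-2)u'(y)/u(y)² < 0`; consequently every critical
point of `u'` is a strict local maximum of `u'`. -/
theorem selfexpander_critical_points_of_deriv_strict_local_max
    (n : ℕ) (hn : 3 ≤ n) (C : ℝ) (hC : 0 < C) (u u' u'' u''' : ℝ → ℝ)
    (hpos : ∀ y ∈ Ici (0:ℝ), 0 < u y)
    (hd1 : ∀ y ∈ Ici (0:ℝ), HasDerivWithinAt u (u' y) (Ici 0) y)
    (hd2 : ∀ y ∈ Ici (0:ℝ), HasDerivWithinAt u' (u'' y) (Ici 0) y)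
    (hd3 : ∀ y ∈ Ici (0:ℝ), HasDerivWithinAt u'' (u''' y) (Ici 0) y)
    (hcont : ContinuousOn u''' (Ici 0))
    (hODE : ∀ y ∈ Ici (0:ℝ),
      u'' y = (1 + (u' y)^2) * ((u y - u' y * y)/2 + ((n : ℝ) - 2) / u y))
    (hu0 : u 0 = C) (hu'0 : u' 0 = 0) :
    ∀ y : ℝ, 0 < y → u'' y = 0 →
      u''' y = -(1 + (u' y)^2) * ((n : ℝ) - 2) * u' y / (u y)^2 ∧
      u''' y < 0 ∧
      ∀ᶠ z in 𝓝[≠] y, u' z < u' y :=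
  selfexpander_critical_points_of_deriv_strict_local_max_general n hn u u' u'' u''' hpos hd1 hd2 hd3
    hODE
end

section
/- Let u solve the self-expander ODE with n ≥ 3, u(0) = C > 0, u'(0) = 0, and define α(y) = arctan(u(y)/y) for y > 0. Then every critical point of α is a strict local minimum: at any y > 0 with y·u'(y) = u(y), one has u''(y) > 0 and α''(y) = y·u''(y)/(u(y)² + y²) > 0. -/
open Set Filter Topology Real

/-!
At a critical point `y u' = u` the self-expander equation reduces to
`u'' = (1 + u'^2)(n - 2)/u > 0`. Differentiating `α' = (y u' - u)/(u² + y²)` there, the terms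
carrying the factor `y u' - u` vanish and `α'' = y u''/(u² + y²) > 0`; the strict second
derivative test then makes `y` a strict local minimum of `α`.
-/

theorem eventually_lt_of_hasDerivAt_of_hasDerivAt_pos {f f' : ℝ → ℝ} {x₀ f'' : ℝ}
    (hf : ∀ᶠ x in 𝓝 x₀, HasDerivAt f (f' x) x) (hcrit : f' x₀ = 0)
    (hf' : HasDerivAt f' f'' x₀) (hpos : 0 < f'') :
    ∀ᶠ x in 𝓝[≠] x₀, f x₀ < f x := by
  have hslope : ∀ᶠ x in 𝓝 x₀, x ∈ ({x₀}ᶜ : Set ℝ) → 0 < slope f' x₀ x :=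
    eventually_nhdsWithin_iff.mp
      ((hasDerivAt_iff_tendsto_slope.mp hf').eventually (eventually_gt_nhds hpos))
  obtain ⟨ε, hε, hball⟩ := Metric.eventually_nhds_iff_ball.mp (hf.and hslope)
  rw [Real.ball_eq_Ioo] at hball
  have hcont : ContinuousOn f (Ioo (x₀ - ε) (x₀ + ε)) := fun x hx =>
    (hball x hx).1.continuousAt.continuousWithinAt
  have hmono : StrictMonoOn f (Ico x₀ (x₀ + ε)) := by
    refine strictMonoOn_of_deriv_pos (convex_Ico _ _)
      (hcont.mono (Ico_subset_Ioo_left (by linarith))) fun x hx => ?_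
    rw [interior_Ico] at hx
    have hx' : x ∈ Ioo (x₀ - ε) (x₀ + ε) := ⟨by linarith [hx.1], hx.2⟩
    rw [(hball x hx').1.deriv]
    exact pos_of_slope_pos hx.1 ((hball x hx').2 hx.1.ne') hcrit
  have hanti : StrictAntiOn f (Ioc (x₀ - ε) x₀) := by
    refine strictAntiOn_of_deriv_neg (convex_Ioc _ _)
      (hcont.mono (Ioc_subset_Ioo_right (by linarith))) fun x hx => ?_
    rw [interior_Ioc] at hx
    have hx' : x ∈ Ioo (x₀ - ε) (x₀ + ε) := ⟨hx.1, by linarith [hx.2]⟩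
    rw [(hball x hx').1.deriv]
    exact neg_of_slope_pos hx.2 ((hball x hx').2 hx.2.ne) hcrit
  filter_upwards [nhdsWithin_le_nhds (Ioo_mem_nhds (by linarith : x₀ - ε < x₀)
    (by linarith : x₀ < x₀ + ε)), self_mem_nhdsWithin] with x hx (hne : x ≠ x₀)
  rcases hne.lt_or_gt with hlt | hgt
  · exact hanti ⟨hx.1, hlt.le⟩ ⟨by linarith, le_rfl⟩ hlt
  · exact hmono ⟨le_rfl, by linarith⟩ ⟨hgt.le, hx.2⟩ hgt

theorem selfExpander_rhs_pos_of_mul_eq {n a b y : ℝ} (hn : 2 < n) (ha : 0 < a)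
    (hcrit : y * b = a) : 0 < (1 + b ^ 2) * ((a - b * y) / 2 + (n - 2) / a) := by
  have hn2 : 0 < n - 2 := sub_pos.mpr hn
  rw [mul_comm b y, hcrit, sub_self, zero_div, zero_add]
  positivity

theorem hasDerivAt_angleDeriv_of_mul_eq {u u' : ℝ → ℝ} {y b : ℝ}
    (hu : HasDerivAt u (u' y) y) (hu' : HasDerivAt u' b y) (hcrit : y * u' y = u y)
    (hD : u y ^ 2 + y ^ 2 ≠ 0) :
    HasDerivAt (fun z => (z * u' z - u z) / (u z ^ 2 + z ^ 2)) (y * b / (u y ^ 2 + y ^ 2)) y := by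
  refine ((((hasDerivAt_id' y).mul hu').sub hu).div
    ((hu.pow 2).add ((hasDerivAt_id' y).pow 2)) hD).congr_deriv ?_
  simp only [Pi.sub_apply, Pi.mul_apply, Pi.add_apply, Pi.pow_apply, hcrit, sub_self, zero_mul,
    sub_zero]
  field_simp
  ring

theorem selfexpander_angle_critical_points_strict_local_min_general
    (n : ℕ) (hn : 3 ≤ n) (u u' u'' α' α'' : ℝ → ℝ)
    (hpos : ∀ y ∈ Ici (0:ℝ), 0 < u y)
    (hd1 : ∀ y ∈ Ici (0:ℝ), HasDerivWithinAt u (u' y) (Ici 0) y)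
    (hd2 : ∀ y ∈ Ici (0:ℝ), HasDerivWithinAt u' (u'' y) (Ici 0) y)
    (hODE : ∀ y ∈ Ici (0:ℝ),
      u'' y = (1 + (u' y)^2) * ((u y - u' y * y)/2 + ((n : ℝ) - 2) / u y))
    (hA1 : ∀ y : ℝ, 0 < y → HasDerivAt (fun z => Real.arctan (u z / z)) (α' y) y)
    (hA1' : ∀ y : ℝ, 0 < y → α' y = (y * u' y - u y) / ((u y)^2 + y^2))
    (hA2 : ∀ y : ℝ, 0 < y → HasDerivAt α' (α'' y) y) :
    ∀ y : ℝ, 0 < y → y * u' y = u y →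
      0 < u'' y ∧
      α'' y = y * u'' y / ((u y)^2 + y^2) ∧
      0 < α'' y ∧
      ∀ᶠ z in 𝓝[≠] y, Real.arctan (u y / y) < Real.arctan (u z / z) := by
  intro y hy hcrit
  have hy0 : y ∈ Ici (0:ℝ) := hy.le
  have huy : 0 < u y := hpos y hy0
  have hD : 0 < u y ^ 2 + y ^ 2 := by positivity
  have hu''pos : 0 < u'' y := hODE y hy0 ▸
    selfExpander_rhs_pos_of_mul_eq (by exact_mod_cast hn) huy hcrit
  have hα'' : α'' y = y * u'' y / (u y ^ 2 + y ^ 2) :=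
    (hA2 y hy).unique <| (hasDerivAt_angleDeriv_of_mul_eq
      ((hd1 y hy0).hasDerivAt (Ici_mem_nhds hy)) ((hd2 y hy0).hasDerivAt (Ici_mem_nhds hy))
      hcrit hD.ne').congr_of_eventuallyEq (eventually_of_mem (Ioi_mem_nhds hy) hA1')
  have hα''pos : 0 < α'' y := hα''.symm ▸ by positivity
  refine ⟨hu''pos, hα'', hα''pos, ?_⟩
  exact eventually_lt_of_hasDerivAt_of_hasDerivAt_pos (eventually_of_mem (Ioi_mem_nhds hy) hA1)
    (by rw [hA1' y hy, hcrit, sub_self, zero_div]) (hA2 y hy) hα''pos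

/-- For a solution of the self-expander ODE with `n ≥ 3`, `u(0)=C>0`, `u'(0)=0`,
the angle function `α(y) = arctan(u(y)/y)` has only strict local minima as
critical points: if `y·u'(y) = u(y)` at some `y > 0`, then `u''(y) > 0` and
`α''(y) = y·u''(y)/(u(y)²+y²) > 0`. -/
theorem selfexpander_angle_critical_points_strict_local_min
    (n : ℕ) (hn : 3 ≤ n) (C : ℝ) (hC : 0 < C) (u u' u'' α' α'' : ℝ → ℝ)
    (hpos : ∀ y ∈ Ici (0:ℝ), 0 < u y)
    (hd1 : ∀ y ∈ Ici (0:ℝ), HasDerivWithinAt u (u' y) (Ici 0) y)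
    (hd2 : ∀ y ∈ Ici (0:ℝ), HasDerivWithinAt u' (u'' y) (Ici 0) y)
    (hODE : ∀ y ∈ Ici (0:ℝ),
      u'' y = (1 + (u' y)^2) * ((u y - u' y * y)/2 + ((n : ℝ) - 2) / u y))
    (hu0 : u 0 = C) (hu'0 : u' 0 = 0)
    (hA1 : ∀ y : ℝ, 0 < y → HasDerivAt (fun z => Real.arctan (u z / z)) (α' y) y)
    (hA1' : ∀ y : ℝ, 0 < y → α' y = (y * u' y - u y) / ((u y)^2 + y^2))
    (hA2 : ∀ y : ℝ, 0 < y → HasDerivAt α' (α'' y) y) :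
    ∀ y : ℝ, 0 < y → y * u' y = u y →
      0 < u'' y ∧
      α'' y = y * u'' y / ((u y)^2 + y^2) ∧
      0 < α'' y ∧
      ∀ᶠ z in 𝓝[≠] y, Real.arctan (u y / y) < Real.arctan (u z / z) :=
  selfexpander_angle_critical_points_strict_local_min_general n hn u u' u'' α' α'' hpos hd1 hd2 hODE
    hA1 hA1' hA2
end

section
/- Let u solve the self-expander ODE with n ≥ 3, u(0) = C > 0, u'(0) = 0. If u' is bounded on [0,∞), then u'' has at most one zero on (0,∞), and u''(y) → 0 as y → ∞. -/
/-!
A zero of `u''` at `y > 0` is a strict down-crossing (`u''' < 0` there), so by a barrier argument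
`u''` stays negative after a zero. Hence `u''` has at most one zero and has eventually constant sign.
Then `u'` is eventually monotone and bounded, so it converges. The function `w = u - y u'` has
`w' = -y u''`, while by the ODE `u''` has the sign of `w / 2 + (n - 2) / u`; so `w` is eventually
monotone and bounded on the side towards which it moves, and converges as well. As `u` increases,
`1 / u` converges. Thus the right-hand side of the ODE has a limit, and this limit of `u''` must be
`0` because `u'` converges.
-/

open Set Filter Topology

section RealFunction

variable {f f' : ℝ → ℝ}

theorem monotoneOn_Ici_of_hasDerivAt_nonneg {b : ℝ} (hf : ∀ x ∈ Ici b, HasDerivAt f (f' x) x)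
    (hf' : ∀ x ∈ Ici b, 0 ≤ f' x) : MonotoneOn f (Ici b) :=
  monotoneOn_of_hasDerivWithinAt_nonneg (convex_Ici b)
    (fun x hx => (hf x hx).continuousAt.continuousWithinAt)
    (fun x hx => (hf x (interior_subset hx)).hasDerivWithinAt)
    (fun x hx => hf' x (interior_subset hx))

theorem exists_tendsto_atTop_of_hasDerivAt_nonneg {M : ℝ}
    (hf : ∀ᶠ x in atTop, HasDerivAt f (f' x) x) (hf' : ∀ᶠ x in atTop, 0 ≤ f' x)
    (hM : ∀ᶠ x in atTop, f x ≤ M) : ∃ L, Tendsto f atTop (𝓝 L) := by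
  obtain ⟨b, hb⟩ := eventually_atTop.1 ((hf.and hf').and hM)
  have hmono : MonotoneOn f (Ici b) :=
    monotoneOn_Ici_of_hasDerivAt_nonneg (fun x hx => (hb x hx).1.1) (fun x hx => (hb x hx).1.2)
  have hg : Monotone (fun x => f (max x b)) := fun x y hxy =>
    hmono (le_max_right x b) (le_max_right y b) (max_le_max_right b hxy)
  have hfg : (fun x => f (max x b)) =ᶠ[atTop] f := by
    filter_upwards [eventually_ge_atTop b] with x hx
    rw [max_eq_left hx]
  refine ⟨_, (tendsto_atTop_ciSup hg ?_).congr' hfg⟩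
  exact ⟨M, forall_mem_range.2 fun x => (hb _ (le_max_right x b)).2⟩

theorem exists_tendsto_atTop_of_hasDerivAt_nonpos {M : ℝ}
    (hf : ∀ᶠ x in atTop, HasDerivAt f (f' x) x) (hf' : ∀ᶠ x in atTop, f' x ≤ 0)
    (hM : ∀ᶠ x in atTop, M ≤ f x) : ∃ L, Tendsto f atTop (𝓝 L) := by
  obtain ⟨L, hL⟩ := exists_tendsto_atTop_of_hasDerivAt_nonneg (f := -f) (f' := -f') (M := -M)
    (hf.mono fun _ hx => hx.neg) (hf'.mono fun _ hx => neg_nonneg.2 hx)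
    (hM.mono fun _ hx => neg_le_neg hx)
  exact ⟨-L, by simpa using hL.neg⟩

theorem exists_tendsto_inv_of_hasDerivAt_nonneg (hf : ∀ᶠ x in atTop, HasDerivAt f (f' x) x)
    (hf' : ∀ᶠ x in atTop, 0 ≤ f' x) (hpos : ∀ᶠ x in atTop, 0 < f x) :
    ∃ r, Tendsto (fun x => (f x)⁻¹) atTop (𝓝 r) :=
  exists_tendsto_atTop_of_hasDerivAt_nonpos (f' := fun x => -f' x / f x ^ 2) (M := 0)
    ((hf.and hpos).mono fun _ h => h.1.inv h.2.ne')
    (hf'.mono fun _ h => div_nonpos_of_nonpos_of_nonneg (neg_nonpos.2 h) (sq_nonneg _))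
    (hpos.mono fun _ h => (inv_pos.2 h).le)

theorem nonpos_of_tendsto_of_tendsto_deriv {L c : ℝ} (hf : ∀ᶠ x in atTop, HasDerivAt f (f' x) x)
    (hL : Tendsto f atTop (𝓝 L)) (hc : Tendsto f' atTop (𝓝 c)) : c ≤ 0 := by
  by_contra! hc0
  -- `f x - c x / 2` is eventually increasing, yet it tends to `-∞`.
  set g : ℝ → ℝ := fun x => f x - c / 2 * x
  obtain ⟨b, hb⟩ := eventually_atTop.1 (hf.and (hc.eventually_const_le (half_lt_self hc0)))
  have hmono : MonotoneOn g (Ici b) :=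
    monotoneOn_Ici_of_hasDerivAt_nonneg (f' := fun x => f' x - c / 2 * 1)
      (fun x hx => (hb x hx).1.sub ((hasDerivAt_id x).const_mul (c / 2)))
      (fun x hx => by linarith [(hb x hx).2])
  have hbot : Tendsto g atTop atBot := by
    have : Tendsto (fun x => -(c / 2 * x)) atTop atBot :=
      tendsto_neg_atTop_atBot.comp (tendsto_id.const_mul_atTop (half_pos hc0))
    simpa [g, sub_eq_add_neg] using hL.add_atBot this
  obtain ⟨x, hxg, hxb⟩ := ((hbot.eventually_lt_atBot (g b)).and (eventually_ge_atTop b)).exists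
  exact (hmono self_mem_Ici hxb hxb).not_gt hxg

theorem eq_zero_of_tendsto_of_tendsto_deriv {L c : ℝ} (hf : ∀ᶠ x in atTop, HasDerivAt f (f' x) x)
    (hL : Tendsto f atTop (𝓝 L)) (hc : Tendsto f' atTop (𝓝 c)) : c = 0 :=
  le_antisymm (nonpos_of_tendsto_of_tendsto_deriv hf hL hc) <| neg_nonpos.1 <|
    nonpos_of_tendsto_of_tendsto_deriv (hf.mono fun _ hx => hx.neg) hL.neg hc.neg

theorem nonpos_of_deriv_neg_at_zeros {a : ℝ} (hf : ∀ x ∈ Ici a, HasDerivAt f (f' x) x)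
    (hf' : ∀ x ∈ Ici a, f x = 0 → f' x < 0) (ha : f a ≤ 0) : ∀ x ∈ Ici a, f x ≤ 0 := fun x hx =>
  image_le_of_deriv_right_lt_deriv_boundary' (B := 0) (B' := 0)
    (fun y hy => (hf y hy.1).continuousAt.continuousWithinAt)
    (fun y hy => (hf y hy.1).hasDerivWithinAt) ha continuousOn_const
    (fun y _ => hasDerivWithinAt_const y _ 0) (fun y hy => hf' y hy.1) (x := x) ⟨hx, le_rfl⟩

theorem neg_of_deriv_neg_at_zeros {a : ℝ} (hf : ∀ x ∈ Ici a, HasDerivAt f (f' x) x)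
    (hf' : ∀ x ∈ Ici a, f x = 0 → f' x < 0) (ha : f a ≤ 0) : ∀ x ∈ Ioi a, f x < 0 := by
  have hle := nonpos_of_deriv_neg_at_zeros hf hf' ha
  intro x hx
  refine (hle x (Ioi_subset_Ici_self hx)).lt_of_ne fun hx0 => ?_
  have hmax : IsLocalMax f x :=
    Filter.mem_of_superset (Ioi_mem_nhds hx) fun y hy => hx0 ▸ hle y (Ioi_subset_Ici_self hy)
  exact (hf' x (Ioi_subset_Ici_self hx) hx0).ne
    (hmax.hasDerivAt_eq_zero (hf x (Ioi_subset_Ici_self hx)))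

theorem subsingleton_zeros_of_deriv_neg_at_zeros {a : ℝ} (hf : ∀ x ∈ Ioi a, HasDerivAt f (f' x) x)
    (hf' : ∀ x ∈ Ioi a, f x = 0 → f' x < 0) : (Ioi a ∩ f ⁻¹' {0}).Subsingleton := by
  have key : ∀ x ∈ Ioi a ∩ f ⁻¹' {0}, ∀ y, x < y → f y < 0 := fun x ⟨hx, hx0⟩ y hxy =>
    have hsub := Ici_subset_Ioi.2 hx
    neg_of_deriv_neg_at_zeros (fun z hz => hf z (hsub hz)) (fun z hz => hf' z (hsub hz))
      (le_of_eq hx0) y hxy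
  intro x hx y hy
  by_contra hne
  rcases lt_or_gt_of_ne hne with hxy | hyx
  · exact (key x hx y hxy).ne hy.2
  · exact (key y hy x hyx).ne hx.2

theorem eventually_pos_or_eventually_neg_of_deriv_neg_at_zeros {a : ℝ}
    (hf : ∀ x ∈ Ioi a, HasDerivAt f (f' x) x) (hf' : ∀ x ∈ Ioi a, f x = 0 → f' x < 0) :
    (∀ᶠ x in atTop, 0 < f x) ∨ (∀ᶠ x in atTop, f x < 0) := by
  by_cases hzero : ∃ z ∈ Ioi a, f z = 0
  · obtain ⟨z, hz : a < z, hz0⟩ := hzero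
    have hsub := Ici_subset_Ioi.2 hz
    exact Or.inr <| (eventually_gt_atTop z).mono <| neg_of_deriv_neg_at_zeros
      (fun y hy => hf y (hsub hy)) (fun y hy => hf' y (hsub hy)) (le_of_eq hz0)
  · push Not at hzero
    have hcont : ContinuousOn f (Ioi a) := fun x hx => (hf x hx).continuousAt.continuousWithinAt
    have hsign : ∀ x ∈ Ioi a, ∀ y ∈ Ioi a, f x < 0 → f y < 0 := by
      intro x hx y hy hfx
      by_contra! hfy
      obtain ⟨z, hz, hz0⟩ := isPreconnected_Ioi.intermediate_value hx hy hcont ⟨hfx.le, hfy⟩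
      exact hzero z hz hz0
    have ha : a + 1 ∈ Ioi a := lt_add_one a
    rcases (hzero _ ha).lt_or_gt with hneg | hpos
    · exact Or.inr (eventually_gt_atTop a |>.mono fun x hx => hsign _ ha x hx hneg)
    · exact Or.inl (eventually_gt_atTop a |>.mono fun x hx =>
        (hzero x hx).lt_or_gt.resolve_left fun hfx => (hsign x hx _ ha hfx).not_gt hpos)

end RealFunction

namespace SelfExpander

variable {k ρ M : ℝ} {u u' u'' : ℝ → ℝ}

theorem hasDerivAt_sub_deriv_mul_self {y : ℝ} (hu : HasDerivAt u (u' y) y)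
    (hu' : HasDerivAt u' (u'' y) y) : HasDerivAt (fun y => u y - u' y * y) (-(u'' y * y)) y :=
  (hu.sub (hu'.mul (hasDerivAt_id' y))).congr_deriv (by ring)

variable (hu : ∀ᶠ y in atTop, HasDerivAt u (u' y) y) (hu' : ∀ᶠ y in atTop, HasDerivAt u' (u'' y) y)
  (hODE : ∀ᶠ y in atTop, u'' y = (1 + u' y ^ 2) * ((u y - u' y * y) / 2 + k / u y))
include hu hu' hODE

theorem exists_limits_of_secondDeriv_pos (hρ : Tendsto (fun y => k / u y) atTop (𝓝 ρ))
    (hM : ∀ᶠ y in atTop, u' y ≤ M) (hpos : ∀ᶠ y in atTop, 0 < u'' y) :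
    (∃ L, Tendsto u' atTop (𝓝 L)) ∧ ∃ W, Tendsto (fun y => u y - u' y * y) atTop (𝓝 W) := by
  refine ⟨exists_tendsto_atTop_of_hasDerivAt_nonneg hu' (hpos.mono fun _ h => h.le) hM, ?_⟩
  refine exists_tendsto_atTop_of_hasDerivAt_nonpos (M := -2 * (ρ + 1))
    (hu.and hu' |>.mono fun y h => hasDerivAt_sub_deriv_mul_self h.1 h.2) ?_ ?_
  · filter_upwards [hpos, eventually_ge_atTop 0] with y hy hy0
    exact neg_nonpos.2 (mul_nonneg hy.le hy0)
  · filter_upwards [hpos, hODE, hρ.eventually_lt_const (lt_add_one ρ)] with y hy hy' hyρ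
    have : 0 < (u y - u' y * y) / 2 + k / u y :=
      pos_of_mul_pos_right (hy' ▸ hy) (by positivity)
    linarith

theorem exists_limits_of_secondDeriv_neg (hρ : Tendsto (fun y => k / u y) atTop (𝓝 ρ))
    (hnonneg : ∀ᶠ y in atTop, 0 ≤ u' y) (hneg : ∀ᶠ y in atTop, u'' y < 0) :
    (∃ L, Tendsto u' atTop (𝓝 L)) ∧ ∃ W, Tendsto (fun y => u y - u' y * y) atTop (𝓝 W) := by
  refine ⟨exists_tendsto_atTop_of_hasDerivAt_nonpos hu' (hneg.mono fun _ h => h.le) hnonneg, ?_⟩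
  refine exists_tendsto_atTop_of_hasDerivAt_nonneg (M := -2 * (ρ - 1))
    (hu.and hu' |>.mono fun y h => hasDerivAt_sub_deriv_mul_self h.1 h.2) ?_ ?_
  · filter_upwards [hneg, eventually_ge_atTop 0] with y hy hy0
    exact neg_nonneg.2 (mul_nonpos_of_nonpos_of_nonneg hy.le hy0)
  · filter_upwards [hneg, hODE, hρ.eventually_const_lt (sub_one_lt ρ)] with y hy hy' hyρ
    have : (u y - u' y * y) / 2 + k / u y < 0 :=
      neg_of_mul_neg_right (hy' ▸ hy) (by positivity)
    linarith

theorem tendsto_secondDeriv_atTop_zero (hpos : ∀ᶠ y in atTop, 0 < u y)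
    (hu'nonneg : ∀ᶠ y in atTop, 0 ≤ u' y) (hM : ∀ᶠ y in atTop, u' y ≤ M)
    (hsign : (∀ᶠ y in atTop, 0 < u'' y) ∨ (∀ᶠ y in atTop, u'' y < 0)) :
    Tendsto u'' atTop (𝓝 0) := by
  obtain ⟨r, hr⟩ := exists_tendsto_inv_of_hasDerivAt_nonneg hu hu'nonneg hpos
  have hρ : Tendsto (fun y => k / u y) atTop (𝓝 (k * r)) := by
    simpa only [div_eq_mul_inv] using hr.const_mul k
  obtain ⟨⟨L, hL⟩, W, hW⟩ := hsign.elim (exists_limits_of_secondDeriv_pos hu hu' hODE hρ hM)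
    (exists_limits_of_secondDeriv_neg hu hu' hODE hρ hu'nonneg)
  have hlim : Tendsto u'' atTop (𝓝 ((1 + L ^ 2) * (W / 2 + k * r))) :=
    ((tendsto_const_nhds.add (hL.pow 2)).mul ((hW.div_const 2).add hρ)).congr'
      (hODE.mono fun _ h => h.symm)
  rwa [← eq_zero_of_tendsto_of_tendsto_deriv hu' hL hlim]

end SelfExpander

theorem selfexpander_second_deriv_at_most_one_zero_general
    (n : ℕ) (u u' u'' u''' : ℝ → ℝ)
    (hpos : ∀ y ∈ Ici (0:ℝ), 0 < u y)
    (hd1 : ∀ y ∈ Ici (0:ℝ), HasDerivWithinAt u (u' y) (Ici 0) y)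
    (hd2 : ∀ y ∈ Ici (0:ℝ), HasDerivWithinAt u' (u'' y) (Ici 0) y)
    (hd3 : ∀ y ∈ Ici (0:ℝ), HasDerivWithinAt u'' (u''' y) (Ici 0) y)
    (hODE : ∀ y ∈ Ici (0:ℝ),
      u'' y = (1 + (u' y)^2) * ((u y - u' y * y)/2 + ((n : ℝ) - 2) / u y))
    (hu'pos : ∀ y : ℝ, 0 < y → 0 < u' y)
    (hmax : ∀ y : ℝ, 0 < y → u'' y = 0 → u''' y < 0)
    (hbdd : ∃ M : ℝ, ∀ y ∈ Ici (0:ℝ), |u' y| ≤ M) :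
    (∀ y₁ ∈ Ioi (0:ℝ), ∀ y₂ ∈ Ioi (0:ℝ), u'' y₁ = 0 → u'' y₂ = 0 → y₁ = y₂) ∧
    Tendsto u'' atTop (𝓝 0) := by
  have hasDerivAt_of_pos {f f' : ℝ → ℝ}
      (hf : ∀ y ∈ Ici (0:ℝ), HasDerivWithinAt f (f' y) (Ici 0) y) :
      ∀ y ∈ Ioi (0:ℝ), HasDerivAt f (f' y) y := fun y hy =>
    (hf y (Ioi_subset_Ici_self hy)).hasDerivAt (Ici_mem_nhds hy)
  have hu''' := hasDerivAt_of_pos hd3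
  obtain ⟨M, hM⟩ := hbdd
  refine ⟨fun y₁ h₁ y₂ h₂ e₁ e₂ =>
    subsingleton_zeros_of_deriv_neg_at_zeros hu''' hmax ⟨h₁, e₁⟩ ⟨h₂, e₂⟩, ?_⟩
  have hIci : ∀ᶠ y in atTop, y ∈ Ici (0:ℝ) := eventually_ge_atTop 0
  have hIoi : ∀ᶠ y in atTop, y ∈ Ioi (0:ℝ) := eventually_gt_atTop 0
  exact SelfExpander.tendsto_secondDeriv_atTop_zero (hIoi.mono (hasDerivAt_of_pos hd1))
    (hIoi.mono (hasDerivAt_of_pos hd2)) (hIci.mono hODE) (hIci.mono hpos)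
    (hIoi.mono fun y hy => (hu'pos y hy).le) (hIci.mono fun y hy => (abs_le.1 (hM y hy)).2)
    (eventually_pos_or_eventually_neg_of_deriv_neg_at_zeros hu''' hmax)

/-- For a solution of the self-expander ODE with `n ≥ 3`, `u(0)=C>0`, `u'(0)=0`:
if `u'` is bounded on `[0,∞)`, then `u''` has at most one zero on `(0,∞)` and
`u''(y) → 0` as `y → ∞`. (Known facts: `u''(0) > 0`, `u' > 0` on `(0,∞)`, and
`u''' < 0` wherever `u'' = 0`.) -/
theorem selfexpander_second_deriv_at_most_one_zero
    (n : ℕ) (hn : 3 ≤ n) (C : ℝ) (hC : 0 < C) (u u' u'' u''' : ℝ → ℝ)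
    (hpos : ∀ y ∈ Ici (0:ℝ), 0 < u y)
    (hd1 : ∀ y ∈ Ici (0:ℝ), HasDerivWithinAt u (u' y) (Ici 0) y)
    (hd2 : ∀ y ∈ Ici (0:ℝ), HasDerivWithinAt u' (u'' y) (Ici 0) y)
    (hd3 : ∀ y ∈ Ici (0:ℝ), HasDerivWithinAt u'' (u''' y) (Ici 0) y)
    (hcont : ContinuousOn u'' (Ici 0))
    (hODE : ∀ y ∈ Ici (0:ℝ),
      u'' y = (1 + (u' y)^2) * ((u y - u' y * y)/2 + ((n : ℝ) - 2) / u y))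
    (hu0 : u 0 = C) (hu'0 : u' 0 = 0)
    (hu''0 : 0 < u'' 0)
    (hu'pos : ∀ y : ℝ, 0 < y → 0 < u' y)
    (hmax : ∀ y : ℝ, 0 < y → u'' y = 0 → u''' y < 0)
    (hbdd : ∃ M : ℝ, ∀ y ∈ Ici (0:ℝ), |u' y| ≤ M) :
    (∀ y₁ ∈ Ioi (0:ℝ), ∀ y₂ ∈ Ioi (0:ℝ), u'' y₁ = 0 → u'' y₂ = 0 → y₁ = y₂) ∧
    Tendsto u'' atTop (𝓝 0) :=
  selfexpander_second_deriv_at_most_one_zero_general n u u' u'' u''' hpos hd1 hd2 hd3 hODE hu'pos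
    hmax hbdd
end

section
/- Let u solve the self-expander ODE with n ≥ 3, u(0)=C, u'(0)=0, and suppose u'' has exactly one zero ŷ_C > 0 with u'' > 0 on [0,ŷ_C) and u'' ≤ 0 on [ŷ_C,∞). If u'(ŷ_C) → ∞ while u(ŷ_C)/ŷ_C stays bounded by D, then u(ŷ_C)·ŷ_C → 0; combined with u ≥ C on [0,∞) this gives u(ŷ_C)/ŷ_C ≥ C², contradicting boundedness when C → ∞. -/
open Set Filter Topology

/-! At the inflection point the ODE reads `2(n-2)/(u y) = u' - u/y ≥ u' - D → ∞`, so `u y → 0`.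
Then `u/y = u²/(u y) ≥ u² ≥ C²` eventually, which cannot stay below `D` as `C → ∞`. -/

theorem Filter.Tendsto.nhds_zero_of_const_div_atTop {α : Type*} {l : Filter α} {p : α → ℝ}
    {c : ℝ} (hc : c ≠ 0) (h : Tendsto (fun x => c / p x) l atTop) : Tendsto p l (𝓝 0) := by
  have hp : p = fun x => c / (c / p x) := funext fun x => by field_simp
  rw [hp]
  exact tendsto_const_nhds.div_atTop h

theorem sq_le_div_of_mul_le_one {C u y : ℝ} (hC : 0 ≤ C) (hCu : C ≤ u) (hy : 0 < y)
    (huy : u * y ≤ 1) : C ^ 2 ≤ u / y := by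
  rw [le_div_iff₀ hy]
  calc C ^ 2 * y ≤ u ^ 2 * y := by gcongr
    _ = u * (u * y) := by ring
    _ ≤ u := mul_le_of_le_one_right (hC.trans hCu) huy

theorem asymptotic_angle_blowup_contradiction_general
    (n : ℕ) (hn : 3 ≤ n) (D : ℝ)
    (Ck yk uk vk : ℕ → ℝ)
    (hCpos : ∀ k, 0 < Ck k)
    (hCtop : Tendsto Ck atTop atTop)
    (hypos : ∀ k, 0 < yk k)
    (hugeC : ∀ k, Ck k ≤ uk k)
    (hODE : ∀ k, uk k / yk k = -(2 * ((n : ℝ) - 2)) / (uk k * yk k) + vk k)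
    (hbdd : ∀ k, uk k / yk k ≤ D)
    (hvtop : Tendsto vk atTop atTop) :
    Tendsto (fun k => uk k * yk k) atTop (𝓝 0) ∧
    (∀ᶠ k in atTop, (Ck k) ^ 2 ≤ uk k / yk k) ∧
    False := by
  have hc : (0 : ℝ) < 2 * ((n : ℝ) - 2) := by
    have : (3 : ℝ) ≤ n := by exact_mod_cast hn
    linarith
  have hP0 : Tendsto (fun k => uk k * yk k) atTop (𝓝 0) := by
    refine Tendsto.nhds_zero_of_const_div_atTop hc.ne' ?_
    refine tendsto_atTop_mono (fun k => ?_) (tendsto_atTop_add_const_right _ (-D) hvtop)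
    linarith [hODE k, hbdd k, neg_div (uk k * yk k) (2 * ((n : ℝ) - 2))]
  have hev : ∀ᶠ k in atTop, (Ck k) ^ 2 ≤ uk k / yk k :=
    (hP0.eventually (eventually_le_nhds one_pos)).mono fun k hk =>
      sq_le_div_of_mul_le_one (hCpos k).le (hugeC k) (hypos k) hk
  refine ⟨hP0, hev, ?_⟩
  obtain ⟨k, hk, hDk⟩ :=
    (hev.and (((tendsto_pow_atTop two_ne_zero).comp hCtop).eventually_gt_atTop D)).exists
  exact (hk.trans (hbdd k)).not_gt hDk

/-- The packaged contradiction in the proof that the asymptotic angle tends to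
`π/2` as `C → ∞`. For a sequence of solutions with initial values `Ck → ∞`,
inflection points `yk` (zeros of `u''`) at which the ODE gives
`u(yk)/yk = -2(n-2)/(u(yk)·yk) + u'(yk)`, with `u(yk) ≥ Ck` (since `u` is
increasing) and `u'(yk) → ∞` while `u(yk)/yk ≤ D` stays bounded: then
`u(yk)·yk → 0`, eventually `u(yk)/yk ≥ Ck²` — a contradiction. -/
theorem asymptotic_angle_blowup_contradiction
    (n : ℕ) (hn : 3 ≤ n) (D : ℝ) (hD : 0 < D)
    (Ck yk uk vk : ℕ → ℝ)
    (hCpos : ∀ k, 0 < Ck k)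
    (hCtop : Tendsto Ck atTop atTop)
    (hypos : ∀ k, 0 < yk k)
    (hugeC : ∀ k, Ck k ≤ uk k)
    (hODE : ∀ k, uk k / yk k = -(2 * ((n : ℝ) - 2)) / (uk k * yk k) + vk k)
    (hbdd : ∀ k, uk k / yk k ≤ D)
    (hvtop : Tendsto vk atTop atTop) :
    Tendsto (fun k => uk k * yk k) atTop (𝓝 0) ∧
    (∀ᶠ k in atTop, (Ck k) ^ 2 ≤ uk k / yk k) ∧
    False :=
  asymptotic_angle_blowup_contradiction_general n hn D Ck yk uk vk hCpos hCtop hypos hugeC hODE hbdd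
    hvtop
end

section
/- For y > 0, the identity d/dy(u/y) = (2/y²)·((n−2)/u − u''/(1+(u')²)) combined with a uniform bound |u''| ≤ D, u ≥ c > 0 and boundedness of u' yields |d/dy(u/y)| ≤ D'/y² for a constant D'; hence u(y)/y converges as y → ∞ and for every δ > 0 there is y_δ such that |u(y)/y − lim| < δ for all y ≥ y_δ, with y_δ uniform over any family of solutions satisfying these uniform bounds. -/
open Set Filter Topology

/-! Along a solution, `(u/y)' = (u'y - u)/y²`, and the equation rewrites `u - u'y` as
`2u''/(1+u'²) - 2(n-2)/u`, which the bounds `u ≥ c`, `|u''| ≤ D` control by a constant. Hence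
`|(u/y)'| ≤ D'/y²` with `D'` depending only on `n, c, D`, and integrating from `y` to `∞` gives
`|u(y)/y - lim| ≤ D'/y` for every solution in the family. -/

theorem hasDerivAt_div_id_of_selfExpander {u : ℝ → ℝ} {u₁ u₂ k y : ℝ}
    (hu : HasDerivAt u u₁ y) (hy : y ≠ 0) (huy : u y ≠ 0)
    (hode : u₂ = (1 + u₁ ^ 2) * ((u y - u₁ * y) / 2 + k / u y)) :
    HasDerivAt (fun z => u z / z) ((2 / y ^ 2) * (k / u y - u₂ / (1 + u₁ ^ 2))) y := by
  refine (hu.div (hasDerivAt_id' y) hy).congr_deriv ?_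
  have : 1 + u₁ ^ 2 ≠ 0 := by positivity
  rw [hode]
  field_simp
  ring

theorem abs_div_sub_div_one_add_sq_le {k v w₁ w₂ c D : ℝ} (hc : 0 < c) (hv : c ≤ v)
    (hw₂ : |w₂| ≤ D) : |k / v - w₂ / (1 + w₁ ^ 2)| ≤ |k| / c + D := by
  have hk : |k / v| ≤ |k| / c := by
    rw [abs_div, abs_of_pos (hc.trans_le hv)]
    gcongr
  have hw : |w₂ / (1 + w₁ ^ 2)| ≤ D := by
    rw [abs_div, abs_of_pos (by positivity : (0 : ℝ) < 1 + w₁ ^ 2)]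
    exact (div_le_self (abs_nonneg _) (le_add_of_nonneg_right (sq_nonneg w₁))).trans hw₂
  exact (abs_sub _ _).trans (add_le_add hk hw)

section DerivBoundDivSq

variable {F F' : ℝ → ℝ} {K : ℝ}

theorem abs_sub_le_of_abs_deriv_le_div_sq {s t : ℝ} (hs : 0 < s) (hst : s ≤ t)
    (hF : ∀ y, s ≤ y → HasDerivAt F (F' y) y) (hF' : ∀ y, s ≤ y → |F' y| ≤ K / y ^ 2) :
    |F t - F s| ≤ K / s - K / t := by
  have hB : ∀ y, 0 < y → HasDerivAt (fun z => K / s - K / z) (K / y ^ 2) y := by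
    intro y hy
    simpa [div_eq_mul_inv] using ((hasDerivAt_inv hy.ne').const_mul K).const_sub (K / s)
  have hpos : ∀ y ∈ Icc s t, 0 < y := fun y hy => hs.trans_le hy.1
  exact image_norm_le_of_norm_deriv_right_le_deriv_boundary' (f := fun y => F y - F s)
    (fun y hy => ((hF y hy.1).sub_const (F s)).continuousAt.continuousWithinAt)
    (fun y hy => ((hF y hy.1).sub_const (F s)).hasDerivWithinAt) (by simp)
    (fun y hy => (hB y (hpos y hy)).continuousAt.continuousWithinAt)
    (fun y hy => (hB y (hpos y (Ico_subset_Icc_self hy))).hasDerivWithinAt)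
    (fun y hy => hF' y hy.1) ⟨hst, le_rfl⟩

theorem exists_tendsto_abs_sub_le_of_abs_deriv_le_div_sq {a : ℝ} (ha : 0 < a)
    (hF : ∀ y, a ≤ y → HasDerivAt F (F' y) y) (hF' : ∀ y, a ≤ y → |F' y| ≤ K / y ^ 2) :
    ∃ l, Tendsto F atTop (𝓝 l) ∧ ∀ y, a ≤ y → |F y - l| ≤ K / y := by
  have hK : 0 ≤ K := by
    have h := mul_nonneg ((abs_nonneg _).trans (hF' a le_rfl)) (sq_nonneg a)
    rwa [div_mul_cancel₀ _ (by positivity)] at h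
  have increment : ∀ s t, a ≤ s → s ≤ t → |F t - F s| ≤ K / s := fun s t hs hst =>
    (abs_sub_le_of_abs_deriv_le_div_sq (ha.trans_le hs) hst (fun y hy => hF y (hs.trans hy))
      (fun y hy => hF' y (hs.trans hy))).trans (sub_le_self _ (div_nonneg hK (ha.le.trans (hs.trans hst))))
  have hcauchy : CauchySeq F := by
    refine Metric.cauchySeq_iff'.2 fun ε hε => ?_
    have hK0 : Tendsto (fun s => K / s) atTop (𝓝 0) := tendsto_const_nhds.div_atTop tendsto_id
    obtain ⟨s, hsε, has⟩ := ((hK0.eventually (gt_mem_nhds hε)).and (eventually_ge_atTop a)).exists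
    exact ⟨s, fun t hst => (increment s t has hst).trans_lt hsε⟩
  obtain ⟨l, hl⟩ := cauchySeq_tendsto_of_complete hcauchy
  refine ⟨l, hl, fun y hy => ?_⟩
  rw [abs_sub_comm]
  exact le_of_tendsto ((hl.sub_const (F y)).abs)
    ((eventually_ge_atTop y).mono fun t hyt => increment y t hy hyt)

end DerivBoundDivSq

theorem selfexpander_uniform_tail_estimate_general
    (n : ℕ) (c D : ℝ) (hc : 0 < c) (hD : 0 < D) :
    ∃ D' : ℝ, 0 < D' ∧ ∀ δ : ℝ, 0 < δ → ∃ yδ : ℝ, 0 < yδ ∧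
      ∀ u u' u'' : ℝ → ℝ,
        (∀ y : ℝ, 0 < y → HasDerivAt u (u' y) y) →
        (∀ y : ℝ, 0 < y → HasDerivAt u' (u'' y) y) →
        (∀ y : ℝ, 0 < y → c ≤ u y) →
        (∀ y : ℝ, 0 < y → |u' y| ≤ D) →
        (∀ y : ℝ, 0 < y → |u'' y| ≤ D) →
        (∀ y : ℝ, 0 < y →
          u'' y = (1 + (u' y)^2) * ((u y - u' y * y)/2 + ((n : ℝ) - 2) / u y)) →
        (∀ y : ℝ, 0 < y → HasDerivAt (fun z => u z / z)
            ((2 / y^2) * (((n : ℝ) - 2) / u y - u'' y / (1 + (u' y)^2))) y) ∧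
        (∀ y : ℝ, 0 < y →
          |(2 / y^2) * (((n : ℝ) - 2) / u y - u'' y / (1 + (u' y)^2))| ≤ D' / y^2) ∧
        ∃ l : ℝ, Tendsto (fun y => u y / y) atTop (𝓝 l) ∧
          ∀ y : ℝ, yδ ≤ y → |u y / y - l| < δ := by
  set D' := 2 * (|(n : ℝ) - 2| / c + D)
  have hD' : 0 < D' := by positivity
  have hyδ : ∀ δ, 0 < δ → 0 < 2 * D' / δ := fun δ hδ => by positivity
  refine ⟨D', hD', fun δ hδ => ⟨2 * D' / δ, hyδ δ hδ, ?_⟩⟩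
  intro u u' u'' hu _ huc _ hu''D hode
  have hderiv : ∀ y, 0 < y → HasDerivAt (fun z => u z / z)
      ((2 / y ^ 2) * (((n : ℝ) - 2) / u y - u'' y / (1 + (u' y) ^ 2))) y := fun y hy =>
    hasDerivAt_div_id_of_selfExpander (hu y hy) hy.ne' (hc.trans_le (huc y hy)).ne' (hode y hy)
  have hbound : ∀ y, 0 < y →
      |(2 / y ^ 2) * (((n : ℝ) - 2) / u y - u'' y / (1 + (u' y) ^ 2))| ≤ D' / y ^ 2 := by
    intro y hy
    rw [abs_mul, abs_of_pos (by positivity : (0 : ℝ) < 2 / y ^ 2)]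
    calc 2 / y ^ 2 * |((n : ℝ) - 2) / u y - u'' y / (1 + (u' y) ^ 2)|
        ≤ 2 / y ^ 2 * (|(n : ℝ) - 2| / c + D) := by
          gcongr
          exact abs_div_sub_div_one_add_sq_le hc (huc y hy) (hu''D y hy)
      _ = D' / y ^ 2 := by ring
  obtain ⟨l, hl, htail⟩ := exists_tendsto_abs_sub_le_of_abs_deriv_le_div_sq (hyδ δ hδ)
    (fun y hy => hderiv y ((hyδ δ hδ).trans_le hy)) (fun y hy => hbound y ((hyδ δ hδ).trans_le hy))
  refine ⟨hderiv, hbound, l, hl, fun y hy => (htail y hy).trans_lt ?_⟩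
  calc D' / y ≤ D' / (2 * D' / δ) := by gcongr
    _ = δ / 2 := by field_simp
    _ < δ := by linarith

/-- Uniform tail estimate for the ratio `u(y)/y` of solutions of the
self-expander ODE: under uniform bounds `u ≥ c`, `|u'| ≤ D`, `|u''| ≤ D`, the
identity `d/dy(u/y) = (2/y²)((n-2)/u - u''/(1+(u')²))` gives
`|d/dy(u/y)| ≤ D'/y²` for a constant `D'` depending only on `n, c, D`; hence
`u(y)/y` converges as `y → ∞`, and for every `δ > 0` there is `y_δ` (uniform
over all solutions with these bounds) with `|u(y)/y - lim| < δ` for `y ≥ y_δ`. -/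
theorem selfexpander_uniform_tail_estimate
    (n : ℕ) (hn : 3 ≤ n) (c D : ℝ) (hc : 0 < c) (hD : 0 < D) :
    ∃ D' : ℝ, 0 < D' ∧ ∀ δ : ℝ, 0 < δ → ∃ yδ : ℝ, 0 < yδ ∧
      ∀ u u' u'' : ℝ → ℝ,
        (∀ y : ℝ, 0 < y → HasDerivAt u (u' y) y) →
        (∀ y : ℝ, 0 < y → HasDerivAt u' (u'' y) y) →
        (∀ y : ℝ, 0 < y → c ≤ u y) →
        (∀ y : ℝ, 0 < y → |u' y| ≤ D) →
        (∀ y : ℝ, 0 < y → |u'' y| ≤ D) →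
        (∀ y : ℝ, 0 < y →
          u'' y = (1 + (u' y)^2) * ((u y - u' y * y)/2 + ((n : ℝ) - 2) / u y)) →
        (∀ y : ℝ, 0 < y → HasDerivAt (fun z => u z / z)
            ((2 / y^2) * (((n : ℝ) - 2) / u y - u'' y / (1 + (u' y)^2))) y) ∧
        (∀ y : ℝ, 0 < y →
          |(2 / y^2) * (((n : ℝ) - 2) / u y - u'' y / (1 + (u' y)^2))| ≤ D' / y^2) ∧
        ∃ l : ℝ, Tendsto (fun y => u y / y) atTop (𝓝 l) ∧
          ∀ y : ℝ, yδ ≤ y → |u y / y - l| < δ :=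
  selfexpander_uniform_tail_estimate_general n c D hc hD
end
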